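/- Let (S, o) be a right loop with G_S transitive on S \ {e}, f(x', x) = id for all x, and σ_y a homomorphism for some y ≠ e. Then every element of G_S is a twisted automorphism of (S, o), i.e., G_S is a subgroup of TAut(S, o). -/

import Mathlib

/-- A right loop: identity `e` and bijective right translations. -/
structure RightLoop (S : Type*) where
  op : S → S → S
  e : S
  op_e : ∀ x, op x e = x
  e_op : ∀ x, op e x = x
  bij : ∀ a, Function.Bijective (fun x => op x a)

/-- The inner mapping group: the subgroup of `Equiv.Perm S` generated by the
right inner mappings `f y z`. -/
def innerGroup {S : Type*} (f : S → S → Equiv.Perm S) : Subgroup (Equiv.Perm S) :=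
  Subgroup.closure (Set.range (fun p : S × S => f p.1 p.2))

/-!
By `f(x', x) = id`, right translation by `x'` inverts right translation by `x`, so `x o x' = e`.
Every `h ∈ G_S` fixes `e`, and `σ` satisfies the cocycle identity
`σ_z(h k) = σ_{k z}(h) ∘ σ_z(k)`. Since `G_S` moves `y` to any `w ≠ e` and `σ_y` is multiplicative
on `G_S`, this identity forces `σ_w(h) = σ_y(h)` for all `w ≠ e`. Hence, for `x ≠ e`,
`σ_w(h)(x) = σ_{x'}(h)(x) = (h(x'))'`, and `h(x o w) = σ_w(h)(x) o h(w)` is the twisted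
automorphism identity.
-/

namespace RightLoop

variable {S : Type*} (L : RightLoop S) {inv : S → S} {f : S → S → Equiv.Perm S}
  {σ : S → Equiv.Perm S → Equiv.Perm S}

theorem op_right_cancel {a u v : S} (h : L.op u a = L.op v a) : u = v :=
  (L.bij a).1 h

theorem inv_e (hinv : ∀ x, L.op (inv x) x = L.e) : inv L.e = L.e := by
  simpa only [L.op_e] using hinv L.e

theorem inv_ne_e (hinv : ∀ x, L.op (inv x) x = L.e) {x : S} (hx : x ≠ L.e) :
    inv x ≠ L.e := by
  intro h
  simpa only [h, L.e_op, hx] using hinv x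

theorem innerGroup_le_stabilizer
    (hf : ∀ y z x, L.op (f y z x) (L.op y z) = L.op (L.op x y) z) :
    innerGroup f ≤ MulAction.stabilizer (Equiv.Perm S) L.e := by
  refine (Subgroup.closure_le _).2 ?_
  rintro _ ⟨⟨y, z⟩, rfl⟩
  rw [SetLike.mem_coe, MulAction.mem_stabilizer_iff, Equiv.Perm.smul_def]
  refine L.op_right_cancel (a := L.op y z) ?_
  simpa only [L.e_op] using hf y z L.e

theorem op_inv_op (hinv : ∀ x, L.op (inv x) x = L.e)
    (hf : ∀ y z x, L.op (f y z x) (L.op y z) = L.op (L.op x y) z)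
    (hff : ∀ x, f (inv x) x = 1) (u x : S) :
    L.op (L.op u (inv x)) x = u := by
  simpa only [hff, hinv, L.op_e, Equiv.Perm.one_apply] using (hf (inv x) x u).symm

theorem op_op_inv (hinv : ∀ x, L.op (inv x) x = L.e)
    (hf : ∀ y z x, L.op (f y z x) (L.op y z) = L.op (L.op x y) z)
    (hff : ∀ x, f (inv x) x = 1) (u x : S) :
    L.op (L.op u x) (inv x) = u :=
  L.op_right_cancel (L.op_inv_op hinv hf hff _ x)

theorem op_inv_self (hinv : ∀ x, L.op (inv x) x = L.e)
    (hf : ∀ y z x, L.op (f y z x) (L.op y z) = L.op (L.op x y) z)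
    (hff : ∀ x, f (inv x) x = 1) (x : S) :
    L.op x (inv x) = L.e := by
  simpa only [L.e_op] using L.op_op_inv hinv hf hff L.e x

theorem sigma_apply_e (hσ : ∀ y h x, L.op (σ y h x) (h y) = h (L.op x y))
    (w : S) (h : Equiv.Perm S) : σ w h L.e = L.e :=
  L.op_right_cancel (a := h w) (by rw [hσ, L.e_op, L.e_op])

theorem sigma_mul_apply (hσ : ∀ y h x, L.op (σ y h x) (h y) = h (L.op x y))
    (h k : Equiv.Perm S) (z x : S) :
    σ z (h * k) x = σ (k z) h (σ z k x) := by
  refine L.op_right_cancel (a := h (k z)) ?_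
  calc L.op (σ z (h * k) x) (h (k z)) = (h * k) (L.op x z) := hσ z (h * k) x
    _ = h (L.op (σ z k x) (k z)) := by rw [Equiv.Perm.mul_apply, hσ]
    _ = L.op (σ (k z) h (σ z k x)) (h (k z)) := (hσ _ _ _).symm

theorem sigma_inv_apply (hinv : ∀ x, L.op (inv x) x = L.e)
    (hf : ∀ y z x, L.op (f y z x) (L.op y z) = L.op (L.op x y) z)
    (hff : ∀ x, f (inv x) x = 1)
    (hσ : ∀ y h x, L.op (σ y h x) (h y) = h (L.op x y))
    {h : Equiv.Perm S} (he : h L.e = L.e) (x : S) :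
    σ (inv x) h x = inv (h (inv x)) :=
  L.op_right_cancel (a := h (inv x)) (by rw [hσ, L.op_inv_self hinv hf hff, he, hinv])

theorem sigma_eq_of_ne_e (hσ : ∀ y h x, L.op (σ y h x) (h y) = h (L.op x y))
    (htrans : ∀ a b : S, a ≠ L.e → b ≠ L.e → ∃ h ∈ innerGroup f, h a = b)
    {y : S} (hy : y ≠ L.e)
    (hhom : ∀ h k, h ∈ innerGroup f → k ∈ innerGroup f → σ y (h * k) = σ y h * σ y k)
    {h : Equiv.Perm S} (hh : h ∈ innerGroup f) {w : S} (hw : w ≠ L.e) :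
    σ w h = σ y h := by
  obtain ⟨k, hk, rfl⟩ := htrans y w hy hw
  ext x
  obtain ⟨x₀, rfl⟩ := (σ y k).surjective x
  rw [← L.sigma_mul_apply hσ, hhom h k hh hk, Equiv.Perm.mul_apply]

end RightLoop

/-- Under transitivity, `f(x', x) = id` and `σ_y` a homomorphism for some `y ≠ e`,
every member of `G_S` is a twisted automorphism of `(S, o)`. -/
theorem innerGroup_subset_taut {S : Type*} (L : RightLoop S)
    (inv : S → S) (hinv : ∀ x, L.op (inv x) x = L.e)
    (f : S → S → Equiv.Perm S)
    (hf : ∀ y z x, L.op (f y z x) (L.op y z) = L.op (L.op x y) z)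
    (hff : ∀ x, f (inv x) x = 1)
    (σ : S → Equiv.Perm S → Equiv.Perm S)
    (hσ : ∀ y h x, L.op (σ y h x) (h y) = h (L.op x y))
    (htrans : ∀ a b : S, a ≠ L.e → b ≠ L.e → ∃ h ∈ innerGroup f, h a = b)
    (y : S) (hy : y ≠ L.e)
    (hhom : ∀ h k, h ∈ innerGroup f → k ∈ innerGroup f → σ y (h * k) = σ y h * σ y k) :
    ∀ h ∈ innerGroup f, ∀ x w : S, w ≠ L.e →
      h (L.op x w) = L.op (inv (h (inv x))) (h w) := by
  intro h hh x w hw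
  have he : h L.e = L.e := L.innerGroup_le_stabilizer hf hh
  rw [← hσ w h x]
  congr 1
  by_cases hx : x = L.e
  · rw [hx, L.sigma_apply_e hσ, L.inv_e hinv, he, L.inv_e hinv]
  · have hσw := L.sigma_eq_of_ne_e hσ htrans hy hhom hh hw
    have hσx := L.sigma_eq_of_ne_e hσ htrans hy hhom hh (L.inv_ne_e hinv hx)
    rw [hσw, ← hσx, L.sigma_inv_apply hinv hf hff hσ he]
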